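/- For reals p ∈ [e^{-1}, e], a > 0, b ≥ e^{-1}, N ≥ 1 and ε > 0, if log((p + N a)/(p + N b)) ≥ ε, then a - b ≥ ε e^{-1}. -/
import Mathlib


theorem log_ratio_ge_implies_diff_ge (p a b N ε : ℝ)
    (hp : p ∈ Set.Icc (Real.exp (-1)) (Real.exp 1))
    (ha : 0 < a) (hb : Real.exp (-1) ≤ b) (hN : 1 ≤ N) (hε : 0 < ε)
    (h : Real.log ((p + N * a) / (p + N * b)) ≥ ε) :
    a - b ≥ ε * Real.exp (-1) := by
  have hpe : 0 < Real.exp (-1) := Real.exp_pos _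
  have hp0 : 0 < p := lt_of_lt_of_le hpe hp.1
  have hN0 : 0 < N := lt_of_lt_of_le one_pos hN
  have hb0 : 0 < b := lt_of_lt_of_le hpe hb
  have hD : 0 < p + N * b := by positivity
  have hlog : Real.log ((p + N * a) / (p + N * b)) ≤ (p + N * a) / (p + N * b) - 1 :=
    Real.log_le_sub_one_of_pos (by positivity)
  have h1 : ε ≤ (p + N * a) / (p + N * b) - 1 := le_trans h hlog
  have h2 : ε * (p + N * b) ≤ N * (a - b) := by
    have := (le_div_iff₀ hD).mp (by linarith : ε + 1 ≤ (p + N * a) / (p + N * b))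
    nlinarith
  have h3 : ε * (N * Real.exp (-1)) ≤ ε * (p + N * b) := by
    have : N * Real.exp (-1) ≤ N * b := by nlinarith
    nlinarith
  have h4 : ε * (N * Real.exp (-1)) ≤ N * (a - b) := le_trans h3 h2
  nlinarith
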